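/- Let A be a C*-algebra and n ∈ ℕ. If A has property (Λ_n), then rr(A) ≤ n. In particular, rr(A) ≤ xrr(A). -/

import Mathlib

open scoped MultiplierAlgebra

namespace RR

/-- `Lg_n(A)_sa` is dense in `A_sa^n`: every self-adjoint `n`-tuple can be approximated by a
self-adjoint unimodular `n`-tuple (one whose sum of squares is invertible). -/
def LgSaDense (A : Type*) [CStarAlgebra A] (n : ℕ) : Prop :=
  ∀ a : Fin n → A, (∀ i, IsSelfAdjoint (a i)) → ∀ ε : ℝ, 0 < ε →
    ∃ b : Fin n → A, (∀ i, IsSelfAdjoint (b i)) ∧ IsUnit (∑ i, b i ^ 2) ∧ ∀ i, ‖a i - b i‖ < ε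

/-- The real rank of a unital C*-algebra: the least `n` such that `Lg_{n+1}(A)_sa` is dense
in `A_sa^{n+1}` (`∞` if there is no such `n`). -/
noncomputable def uRealRank (A : Type*) [CStarAlgebra A] : ℕ∞ :=
  sInf {c : ℕ∞ | ∃ n : ℕ, c = n ∧ LgSaDense A (n + 1)}

/-- The real rank of a (possibly nonunital) C*-algebra, defined via its unitization.
(For unital `A` this agrees with `uRealRank A`, since `rr (A ⊕ ℂ) = rr A`.) -/
noncomputable def realRank (A : Type*) [NonUnitalCStarAlgebra A] : ℕ∞ :=
  uRealRank (Unitization ℂ A)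

/-- The canonical image of `A` as an ideal in its multiplier algebra `𝓜(ℂ, A)`. -/
noncomputable def mIdeal (A : Type*) [NonUnitalCStarAlgebra A] : Set 𝓜(ℂ, A) :=
  Set.range (DoubleCentralizer.coe ℂ : A → 𝓜(ℂ, A))

/-- Property `(Λ_n)`: every self-adjoint `(n+1)`-tuple in `M(A)` whose image in the corona
`M(A)/A` is unimodular (i.e. whose sum of squares is invertible modulo `A`) can be approximated
arbitrarily well, keeping the same image modulo `A`, by a unimodular self-adjoint tuple. -/
def Lambda (A : Type*) [NonUnitalCStarAlgebra A] (n : ℕ) : Prop :=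
  ∀ a : Fin (n + 1) → 𝓜(ℂ, A), (∀ i, IsSelfAdjoint (a i)) →
    (∃ c : 𝓜(ℂ, A), c * (∑ i, a i ^ 2) - 1 ∈ mIdeal A ∧ (∑ i, a i ^ 2) * c - 1 ∈ mIdeal A) →
    ∀ ε : ℝ, 0 < ε →
      ∃ b : Fin (n + 1) → 𝓜(ℂ, A), (∀ i, IsSelfAdjoint (b i)) ∧ IsUnit (∑ i, b i ^ 2) ∧
        ∀ i, ‖a i - b i‖ < ε ∧ a i - b i ∈ mIdeal A

/-- The extension real rank `xrr(A)`: the least `n` such that `A` has `(Λ_m)` for all `m ≥ n`. -/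
noncomputable def xrr (A : Type*) [NonUnitalCStarAlgebra A] : ℕ∞ :=
  sInf {c : ℕ∞ | ∃ n : ℕ, c = n ∧ ∀ m : ℕ, n ≤ m → Lambda A m}

end RR

/-!
Let `φ : Ã → M(A)` be the canonical map. Given a self-adjoint tuple in `Ã`, first nudge it so that
the sum of squares of its scalar parts is nonzero; then the sum of squares of its image under `φ`
is invertible modulo `A`, and `(Λ_n)` yields a nearby unimodular self-adjoint tuple in `M(A)` that
differs from it by elements of `A`. Subtracting those elements in `Ã` gives the approximant. Its
sum of squares is invertible: its scalar part `λ` is nonzero and its image in `M(A)` is invertible,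
and an inverse `t` of `φ (λ + y)` lies in `φ(Ã)`, because `λ t = 1 - y t` and `y t ∈ A`.
-/

open scoped ComplexOrder

namespace DoubleCentralizer

variable {A : Type*} [NonUnitalCStarAlgebra A]

lemma eq_of_fst_eq {a b : 𝓜(ℂ, A)} (h : a.fst = b.fst) : a = b := by
  have hsnd : ‖(a - b).snd‖ = 0 := by rw [← norm_fst_eq_snd, sub_fst, h, sub_self, norm_zero]
  ext1
  exact Prod.ext h (sub_eq_zero.mp (by simpa [sub_snd] using hsnd))

lemma norm_coe (a : A) : ‖(a : 𝓜(ℂ, A))‖ = ‖a‖ := by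
  rw [← norm_fst, coe_fst, ContinuousLinearMap.opNorm_mul_apply]

lemma coe_injective : Function.Injective (DoubleCentralizer.coe ℂ : A → 𝓜(ℂ, A)) := by
  intro a b h
  rw [← sub_eq_zero, ← norm_eq_zero, ← norm_coe, ← coeHom_apply, map_sub, coeHom_apply,
    coeHom_apply, h, sub_self, norm_zero]

lemma coe_snd_apply (t : 𝓜(ℂ, A)) (a : A) : ((t.snd a : A) : 𝓜(ℂ, A)) = a * t :=
  eq_of_fst_eq <| ContinuousLinearMap.ext fun b => t.central a b

end DoubleCentralizer

namespace Unitization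

variable {R A : Type*}

lemma isSelfAdjoint_fst [Star R] [Star A] {x : Unitization R A} (hx : IsSelfAdjoint x) :
    IsSelfAdjoint x.fst := by
  change star x.fst = x.fst
  rw [← fst_star, hx.star_eq]

lemma fst_sum_sq [CommSemiring R] [NonUnitalSemiring A] [Module R A] [IsScalarTower R A A]
    [SMulCommClass R A A] {ι : Type*} (s : Finset ι) (a : ι → Unitization R A) :
    (∑ i ∈ s, a i ^ 2).fst = ∑ i ∈ s, (a i).fst ^ 2 := by
  have h := map_sum (fstHom R A) (fun i => a i ^ 2) s
  simp only [map_pow] at h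
  simpa only [fstHom_apply] using h

end Unitization

lemma Complex.eq_zero_of_sum_sq_eq_zero {ι : Type*} {s : Finset ι} {z : ι → ℂ}
    (hz : ∀ i ∈ s, IsSelfAdjoint (z i)) (h : ∑ i ∈ s, z i ^ 2 = 0) : ∀ i ∈ s, z i = 0 := by
  have hnonneg : ∀ i ∈ s, 0 ≤ z i ^ 2 := fun i hi => by
    rw [sq]; exact (hz i hi).mul_self_nonneg
  exact fun i hi => pow_eq_zero_iff two_ne_zero |>.mp <|
    (Finset.sum_eq_zero_iff_of_nonneg hnonneg).mp h i hi

namespace RR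

variable {A : Type*} [NonUnitalCStarAlgebra A]

variable (A) in
noncomputable def toMultiplier : Unitization ℂ A →⋆ₐ[ℂ] 𝓜(ℂ, A) :=
  Unitization.starLift DoubleCentralizer.coeHom

lemma toMultiplier_apply (x : Unitization ℂ A) :
    toMultiplier A x = algebraMap ℂ 𝓜(ℂ, A) x.fst + x.snd :=
  rfl

lemma eq_of_fst_eq_of_toMultiplier_eq {x y : Unitization ℂ A} (hfst : x.fst = y.fst)
    (h : toMultiplier A x = toMultiplier A y) : x = y := by
  rw [toMultiplier_apply, toMultiplier_apply, hfst, add_right_inj] at h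
  exact Unitization.ext hfst (DoubleCentralizer.coe_injective h)

lemma toMultiplier_eq_of_mul_eq_one {x : Unitization ℂ A} (hx : x.fst ≠ 0) {t : 𝓜(ℂ, A)}
    (ht : toMultiplier A x * t = 1) :
    toMultiplier A (Unitization.inl x.fst⁻¹ - x.fst⁻¹ • (t.snd x.snd : Unitization ℂ A)) = t := by
  have key : x.fst • t = 1 - (x.snd : 𝓜(ℂ, A)) * t := by
    rw [← ht, toMultiplier_apply, add_mul, Algebra.smul_def, add_sub_cancel_right]
  rw [map_sub, map_smul, ← Unitization.algebraMap_eq_inl, AlgHomClass.commutes,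
    toMultiplier_apply (t.snd x.snd : Unitization ℂ A)]
  simp only [Unitization.fst_inr, map_zero, zero_add, Unitization.snd_inr,
    DoubleCentralizer.coe_snd_apply]
  rw [Algebra.algebraMap_eq_smul_one, ← smul_sub, ← key, smul_smul, inv_mul_cancel₀ hx, one_smul]

-- `toMultiplier` is not injective when `A` is unital, hence the condition on the scalar part.
lemma isUnit_of_isUnit_toMultiplier {x : Unitization ℂ A} (hx : x.fst ≠ 0)
    (h : IsUnit (toMultiplier A x)) : IsUnit x := by
  obtain ⟨t, ht, ht'⟩ := isUnit_iff_exists.mp h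
  set y := Unitization.inl x.fst⁻¹ - x.fst⁻¹ • (t.snd x.snd : Unitization ℂ A)
  have hy : toMultiplier A y = t := toMultiplier_eq_of_mul_eq_one hx ht
  have hyfst : y.fst = x.fst⁻¹ := by simp [y, sub_eq_add_neg]
  refine isUnit_iff_exists.mpr ⟨y, ?_, ?_⟩ <;> refine eq_of_fst_eq_of_toMultiplier_eq ?_ ?_
  · rw [Unitization.fst_mul, hyfst, mul_inv_cancel₀ hx, Unitization.fst_one]
  · rw [map_mul, hy, ht, map_one]
  · rw [Unitization.fst_mul, hyfst, inv_mul_cancel₀ hx, Unitization.fst_one]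
  · rw [map_mul, hy, ht', map_one]

lemma toMultiplier_mem_mIdeal {x : Unitization ℂ A} (hx : x.fst = 0) :
    toMultiplier A x ∈ mIdeal A :=
  ⟨x.snd, by rw [toMultiplier_apply, hx, map_zero, zero_add]⟩

lemma exists_inv_mod_mIdeal_toMultiplier {x : Unitization ℂ A} (hx : x.fst ≠ 0) :
    ∃ c : 𝓜(ℂ, A), c * toMultiplier A x - 1 ∈ mIdeal A ∧ toMultiplier A x * c - 1 ∈ mIdeal A := by
  refine ⟨toMultiplier A (Unitization.inl x.fst⁻¹), ?_, ?_⟩ <;>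
    rw [← map_mul, ← map_one (toMultiplier A), ← map_sub] <;>
    refine toMultiplier_mem_mIdeal ?_ <;>
    simp [sub_eq_add_neg, hx]

lemma exists_lift_of_sub_mem_mIdeal {x : Unitization ℂ A} {m : 𝓜(ℂ, A)} (hx : IsSelfAdjoint x)
    (hm : IsSelfAdjoint m) (h : toMultiplier A x - m ∈ mIdeal A) :
    ∃ y : Unitization ℂ A, IsSelfAdjoint y ∧ toMultiplier A y = m ∧ y.fst = x.fst ∧
      ‖x - y‖ = ‖toMultiplier A x - m‖ := by
  obtain ⟨d, hd⟩ := h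
  have hd_sa : IsSelfAdjoint d := DoubleCentralizer.coe_injective <| by
    rw [← DoubleCentralizer.coeHom_apply, map_star, DoubleCentralizer.coeHom_apply, hd,
      (hx.map _).sub hm |>.star_eq]
  refine ⟨x - d, hx.sub (hd_sa.map (Unitization.inrNonUnitalStarAlgHom ℂ A)), ?_, ?_, ?_⟩
  · rw [map_sub, toMultiplier_apply (d : Unitization ℂ A)]
    simp [hd]
  · simp [sub_eq_add_neg]
  · rw [sub_sub_cancel, Unitization.norm_inr, ← hd, DoubleCentralizer.norm_coe]

lemma exists_near_fst_sum_sq_ne_zero {n : ℕ} (a : Fin (n + 1) → Unitization ℂ A)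
    (ha : ∀ i, IsSelfAdjoint (a i)) {ε : ℝ} (hε : 0 < ε) :
    ∃ a' : Fin (n + 1) → Unitization ℂ A, (∀ i, IsSelfAdjoint (a' i)) ∧
      (∑ i, a' i ^ 2).fst ≠ 0 ∧ ∀ i, ‖a i - a' i‖ ≤ ε := by
  by_cases h : (∑ i, a i ^ 2).fst = 0
  · have hzero : ∀ i, (a i).fst = 0 := fun i =>
      Complex.eq_zero_of_sum_sq_eq_zero (fun i _ => Unitization.isSelfAdjoint_fst (ha i))
        (Unitization.fst_sum_sq _ a ▸ h) i (Finset.mem_univ i)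
    set c := algebraMap ℂ (Unitization ℂ A) ε
    have hc : IsSelfAdjoint c := IsSelfAdjoint.algebraMap _ (Complex.conj_ofReal ε)
    refine ⟨Fin.cons (a 0 + c) (Fin.tail a), Fin.cases ((ha 0).add hc) fun i => ha i.succ, ?_,
      Fin.cases ?_ fun i => by simp [Fin.tail, hε.le]⟩
    · rw [Unitization.fst_sum_sq, Fin.sum_univ_succ]
      simp [Fin.tail, hzero, c, Unitization.algebraMap_eq_inl, hε.ne']
    · simp [c, norm_algebraMap', abs_of_pos hε]
  · exact ⟨a, ha, h, fun i => by simp [hε.le]⟩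

lemma lgSaDense_unitization_of_lambda {n : ℕ} (h : Lambda A n) :
    LgSaDense (Unitization ℂ A) (n + 1) := by
  intro a ha ε hε
  obtain ⟨a', ha', hfst, haa'⟩ := exists_near_fst_sum_sq_ne_zero a ha (half_pos hε)
  have hsum : ∑ i, toMultiplier A (a' i) ^ 2 = toMultiplier A (∑ i, a' i ^ 2) := by
    simp only [map_sum, map_pow]
  obtain ⟨b, hb, hb_unit, hab⟩ := h (fun i => toMultiplier A (a' i)) (fun i => (ha' i).map _)
    (hsum ▸ exists_inv_mod_mIdeal_toMultiplier hfst) (ε / 2) (half_pos hε)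
  choose y hy hyb hyfst hynorm using
    fun i => exists_lift_of_sub_mem_mIdeal (ha' i) (hb i) (hab i).2
  refine ⟨y, hy, isUnit_of_isUnit_toMultiplier ?_ ?_, fun i => ?_⟩
  · simpa only [Unitization.fst_sum_sq, hyfst] using hfst
  · simpa only [map_sum, map_pow, hyb] using hb_unit
  · calc ‖a i - y i‖ ≤ ‖a i - a' i‖ + ‖a' i - y i‖ := norm_sub_le_norm_sub_add_norm_sub _ _ _
      _ < ε / 2 + ε / 2 := by rw [hynorm]; exact add_lt_add_of_le_of_lt (haa' i) (hab i).1
      _ = ε := add_halves ε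

end RR

/-- If a C*-algebra `A` has `(Λ_n)`, then `rr(A) ≤ n`; in particular
`rr(A) ≤ xrr(A)`. -/
theorem realRank_le_of_lambda (A : Type*) [NonUnitalCStarAlgebra A] :
    (∀ n : ℕ, RR.Lambda A n → RR.realRank A ≤ n) ∧ RR.realRank A ≤ RR.xrr A := by
  have realRank_le : ∀ n : ℕ, RR.Lambda A n → RR.realRank A ≤ n :=
    fun n h => sInf_le ⟨n, rfl, RR.lgSaDense_unitization_of_lambda h⟩
  refine ⟨realRank_le, le_sInf ?_⟩
  rintro _ ⟨n, rfl, hn⟩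
  exact realRank_le n (hn n le_rfl)
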